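/- arXiv:2001.01427 — 2 statements merged into one kernel-verified Lean document; each statement's English description precedes it below -/
import Mathlib

section
/- Let λ ∈ Γ_k for some k ∈ {1,…,n}, and suppose λ_1 ≥ λ_2 ≥ ⋯ ≥ λ_n. Then λ_1 ≥ λ_2 ≥ ⋯ ≥ λ_k > 0 and σ_k(λ) ≤ C(n,k) λ_1 λ_2 ⋯ λ_k, where C(n,k) = n!/(k!(n−k)!). -/
/-!
Induct on `n`, peeling off the smallest entry `λ_n`. If `λ_n > 0`, all entries are positive and
each of the `C(n,k)` products making up `σ_k(λ)` is at most `λ_1 ⋯ λ_k`. If `λ_n ≤ 0`, the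
recursion `σ_m(λ) = σ_m(λ') + λ_n σ_{m-1}(λ')` for `λ' = (λ_1, …, λ_{n-1})` shows inductively
that `λ' ∈ Γ_k` and `σ_k(λ) ≤ σ_k(λ')`; in particular `k ≤ n - 1`, and the induction hypothesis
for `λ'` gives both claims, with `C(n-1,k) ≤ C(n,k)`.
-/

open Finset Set

noncomputable section

/-- `sigmaV m lam`: the m-th elementary symmetric function σ_m(λ) (σ_0 = 1). -/
def sigmaV {n : ℕ} (m : ℕ) (lam : Fin n → ℝ) : ℝ :=
  ∑ s ∈ Finset.powersetCard m Finset.univ, ∏ i ∈ s, lam i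

/-- σ_m(λ|i): σ_m of the vector λ with the i-th entry set to zero. -/
def sigmaVd {n : ℕ} (m : ℕ) (i : Fin n) (lam : Fin n → ℝ) : ℝ :=
  sigmaV m (Function.update lam i 0)

/-- The Gårding cone Γ_k : σ_m(λ) > 0 for all 1 ≤ m ≤ k. -/
def GammaV {n : ℕ} (k : ℕ) (lam : Fin n → ℝ) : Prop :=
  ∀ m, 1 ≤ m → m ≤ k → 0 < sigmaV m lam

/-- σ_m of a matrix: the sum of its m×m principal minors (equivalently, the m-th
elementary symmetric function σ_m(λ(A)) of its eigenvalues). -/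
def sigmaM {n : ℕ} (m : ℕ) (A : Fin n → Fin n → ℝ) : ℝ :=
  ∑ s ∈ Finset.powersetCard m Finset.univ,
    Matrix.det ((Matrix.of A).submatrix (fun i : ↥s => i.1) (fun i : ↥s => i.1))

/-- λ(A) ∈ Γ_k, expressed via principal minors: σ_m(A) > 0 for all 1 ≤ m ≤ k. -/
def GammaM {n : ℕ} (k : ℕ) (A : Fin n → Fin n → ℝ) : Prop :=
  ∀ m, 1 ≤ m → m ≤ k → 0 < sigmaM m A

/-- Partial derivative ∂u/∂x_i. -/
def pd {n : ℕ} (i : Fin n) (u : (Fin n → ℝ) → ℝ) : (Fin n → ℝ) → ℝ :=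
  fun x => fderiv ℝ u x (Pi.single i 1)

/-- The gradient Du. -/
def gradV {n : ℕ} (u : (Fin n → ℝ) → ℝ) (x : Fin n → ℝ) : Fin n → ℝ :=
  fun i => pd i u x

/-- The Hessian D²u. -/
def hessM {n : ℕ} (u : (Fin n → ℝ) → ℝ) (x : Fin n → ℝ) : Fin n → Fin n → ℝ :=
  fun i j => pd j (pd i u) x

/-- Euclidean inner product. -/
def dotV {n : ℕ} (a b : Fin n → ℝ) : ℝ := ∑ i, a i * b i

/-- Euclidean norm. -/
def normV {n : ℕ} (a : Fin n → ℝ) : ℝ := Real.sqrt (dotV a a)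

/-- Frobenius norm of a matrix (used for |D²u|). -/
def normM {n : ℕ} (A : Fin n → Fin n → ℝ) : ℝ := Real.sqrt (∑ i, ∑ j, (A i j)^2)

/-- `ν` is the outer unit normal to the convex domain Ω at the boundary point x:
the unit vector with ⟨y − x, ν⟩ ≤ 0 for all y ∈ closure Ω. -/
def IsOuterNormalAt {n : ℕ} (Ω : Set (Fin n → ℝ)) (x ν : Fin n → ℝ) : Prop :=
  normV ν = 1 ∧ ∀ y ∈ closure Ω, dotV (y - x) ν ≤ 0

/-- Ω is a domain of boundary regularity Cᵐ: it is the sublevel set of a Cᵐ defining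
function whose gradient does not vanish on the boundary. -/
def BoundaryRegular {n : ℕ} (Ω : Set (Fin n → ℝ)) (m : WithTop ℕ∞) : Prop :=
  ∃ ρ : (Fin n → ℝ) → ℝ, ContDiff ℝ m ρ ∧ Ω = {x | ρ x < 0} ∧
    frontier Ω = {x | ρ x = 0} ∧ ∀ x ∈ frontier Ω, gradV ρ x ≠ 0

/-- Euclidean distance d(x) = dist(x, ∂Ω). -/
def distBd {n : ℕ} (Ω : Set (Fin n → ℝ)) (x : Fin n → ℝ) : ℝ :=
  sInf ((fun y => normV (x - y)) '' frontier Ω)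

/-- The collar Ω_μ = {x ∈ Ω : dist(x, ∂Ω) < μ}. -/
def collar {n : ℕ} (Ω : Set (Fin n → ℝ)) (μ : ℝ) : Set (Fin n → ℝ) :=
  {x ∈ Ω | distBd Ω x < μ}

/-- The quadratic form A(v,v) = Σ_{ij} A_{ij} v_i v_j. -/
def quadF {n : ℕ} (A : Fin n → Fin n → ℝ) (v : Fin n → ℝ) : ℝ :=
  ∑ i, ∑ j, A i j * v i * v j

/-- Time derivative u_t(x,t). -/
def ut {n : ℕ} (u : ℝ → (Fin n → ℝ) → ℝ) (x : Fin n → ℝ) (t : ℝ) : ℝ :=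
  deriv (fun s => u s x) t

/-- ∂[σ_k(λ)/σ_l(λ)]/∂λ_i, via the explicit formula
(σ_{k−1}(λ|i)σ_l(λ) − σ_k(λ)σ_{l−1}(λ|i))/σ_l(λ)², with σ_{−1} := 0. -/
def dQuotV {n : ℕ} (k l : ℕ) (i : Fin n) (lam : Fin n → ℝ) : ℝ :=
  (sigmaVd (k-1) i lam * sigmaV l lam
    - sigmaV k lam * (if l = 0 then 0 else sigmaVd (l-1) i lam)) / (sigmaV l lam)^2

/-- σ_m(A|i): σ_m of the matrix A with the i-th row and column deleted, i.e. the sum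
of the m×m principal minors avoiding index i. -/
def sigmaMd {n : ℕ} (m : ℕ) (i : Fin n) (A : Fin n → Fin n → ℝ) : ℝ :=
  ∑ s ∈ (Finset.powersetCard m Finset.univ).filter (fun s => i ∉ s),
    Matrix.det ((Matrix.of A).submatrix (fun j : ↥s => j.1) (fun j : ↥s => j.1))

/-- ∂[σ_k(A)/σ_l(A)]/∂a_{ii}, via ∂σ_m(A)/∂a_{ii} = σ_{m−1}(A|i) (σ_{−1} := 0):
(σ_{k−1}(A|i)σ_l(A) − σ_k(A)σ_{l−1}(A|i))/σ_l(A)². -/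
def dQuotM {n : ℕ} (k l : ℕ) (i : Fin n) (A : Fin n → Fin n → ℝ) : ℝ :=
  (sigmaMd (k-1) i A * sigmaM l A
    - sigmaM k A * (if l = 0 then 0 else sigmaMd (l-1) i A)) / (sigmaM l A)^2

/-- F^{ij}: the derivative of B ↦ log(σ_k(B)/σ_l(B)) at A in the matrix direction
E_{ij} (the derivative of log(σ_k/σ_l) with respect to the (i,j) entry). -/
def Fcoef {n : ℕ} (k l : ℕ) (i j : Fin n) (A : Fin n → Fin n → ℝ) : ℝ :=
  fderiv ℝ (fun B : Fin n → Fin n → ℝ => Real.log (sigmaM k B / sigmaM l B)) A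
    (Pi.single i (Pi.single j 1))

end

theorem Multiset.esymm_cons_succ {R : Type*} [CommSemiring R] (a : R) (s : Multiset R) (m : ℕ) :
    (a ::ₘ s).esymm (m + 1) = s.esymm (m + 1) + a * s.esymm m := by
  simp [Multiset.esymm, Multiset.powersetCard_cons, Multiset.sum_map_mul_left]

section SortedVectors

variable {n k : ℕ}

theorem sigmaV_eq_esymm (m : ℕ) (lam : Fin n → ℝ) :
    sigmaV m lam = (univ.val.map lam).esymm m :=
  (Finset.esymm_map_val lam univ m).symm

theorem sigmaV_zero (lam : Fin n → ℝ) : sigmaV 0 lam = 1 := by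
  simp [sigmaV]

theorem sigmaV_succ (m : ℕ) (lam : Fin (n + 1) → ℝ) :
    sigmaV (m + 1) lam =
      sigmaV (m + 1) (Fin.init lam) + lam (Fin.last n) * sigmaV m (Fin.init lam) := by
  simp only [sigmaV_eq_esymm, Fin.univ_castSuccEmb, Finset.cons_val, Finset.map_val,
    Multiset.map_cons, Multiset.map_map]
  exact Multiset.esymm_cons_succ _ _ m

theorem le_of_sigmaV_pos {lam : Fin n → ℝ} (h : 0 < sigmaV k lam) : k ≤ n := by
  by_contra! hnk
  rw [sigmaV, Finset.powersetCard_eq_empty.2 (by simpa using hnk), sum_empty] at h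
  exact h.false

theorem prod_le_prod_filter_lt {lam : Fin n → ℝ} (hanti : Antitone lam)
    (hnn : ∀ i, 0 ≤ lam i) {s : Finset (Fin n)} (hs : #s = k) :
    ∏ i ∈ s, lam i ≤ ∏ i ∈ univ.filter (fun i : Fin n => (i : ℕ) < k), lam i := by
  set t := univ.filter (fun i : Fin n => (i : ℕ) < k)
  have hst : #(s \ t) = #(t \ s) := by
    have hkn : k ≤ n := hs ▸ (Finset.card_le_univ s).trans_eq (Fintype.card_fin n)
    exact Finset.card_sdiff_comm (by rw [hs, Fin.card_filter_val_lt, min_eq_right hkn])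
  -- exchange argument: off `s ∩ t` both sides have equally many factors, and every entry
  -- indexed by `s \ t` (indices `≥ k`) is at most every entry indexed by `t \ s` (indices `< k`)
  rw [← prod_inter_mul_prod_sdiff s t, ← prod_inter_mul_prod_sdiff t s, Finset.inter_comm]
  refine mul_le_mul_of_nonneg_left ?_ (prod_nonneg fun i _ => hnn i)
  rcases (s \ t).eq_empty_or_nonempty with hempty | hne
  · have hempty' : t \ s = ∅ :=
      Finset.card_eq_zero.1 (by rw [← hst, hempty, Finset.card_empty])
    rw [hempty, hempty']
  obtain ⟨i₀, hi₀, hmax⟩ := exists_max_image (s \ t) lam hne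
  have hle : ∀ j ∈ t \ s, lam i₀ ≤ lam j := by
    intro j hj
    simp only [t, Finset.mem_sdiff, Finset.mem_filter, Finset.mem_univ, true_and] at hi₀ hj
    exact hanti (Fin.le_def.2 (by omega))
  calc ∏ i ∈ s \ t, lam i ≤ ∏ _i ∈ s \ t, lam i₀ := prod_le_prod (fun i _ => hnn i) hmax
    _ = ∏ _j ∈ t \ s, lam i₀ := by rw [prod_const, prod_const, hst]
    _ ≤ ∏ j ∈ t \ s, lam j := prod_le_prod (fun _ _ => hnn i₀) hle

theorem sigmaV_le_choose_mul_prod_of_nonneg {lam : Fin n → ℝ} (hanti : Antitone lam)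
    (hnn : ∀ i, 0 ≤ lam i) (k : ℕ) :
    sigmaV k lam ≤
      (n.choose k : ℝ) * ∏ i ∈ univ.filter (fun i : Fin n => (i : ℕ) < k), lam i := by
  calc sigmaV k lam
      ≤ #(powersetCard k (univ : Finset (Fin n))) •
          ∏ i ∈ univ.filter (fun i : Fin n => (i : ℕ) < k), lam i :=
        sum_le_card_nsmul _ _ _ fun s hs =>
          prod_le_prod_filter_lt hanti hnn (mem_powersetCard.1 hs).2
    _ = _ := by rw [card_powersetCard, card_fin, nsmul_eq_mul]

theorem sigmaV_init_pos_of_last_nonpos {lam : Fin (n + 1) → ℝ} (hlast : lam (Fin.last n) ≤ 0)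
    (hΓ : GammaV k lam) : ∀ m ≤ k, 0 < sigmaV m (Fin.init lam) := by
  intro m
  induction m with
  | zero => simp [sigmaV_zero]
  | succ m ih =>
    intro hm
    have hcorr := mul_nonpos_of_nonpos_of_nonneg hlast (ih (by omega)).le
    have hcur := hΓ (m + 1) (by omega) hm
    rw [sigmaV_succ] at hcur
    linarith

theorem sigmaV_le_init_of_last_nonpos {lam : Fin (n + 1) → ℝ} (hlast : lam (Fin.last n) ≤ 0)
    (hΓ : GammaV k lam) : sigmaV k lam ≤ sigmaV k (Fin.init lam) := by
  cases k with
  | zero => rw [sigmaV_zero, sigmaV_zero]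
  | succ k =>
    have hcorr := mul_nonpos_of_nonpos_of_nonneg hlast
      (sigmaV_init_pos_of_last_nonpos hlast hΓ k (by omega)).le
    rw [sigmaV_succ]
    linarith

theorem prod_filter_lt_eq_init (hk : k ≤ n) (lam : Fin (n + 1) → ℝ) :
    ∏ i ∈ univ.filter (fun i : Fin (n + 1) => (i : ℕ) < k), lam i
      = ∏ i ∈ univ.filter (fun i : Fin n => (i : ℕ) < k), Fin.init lam i := by
  rw [prod_filter, prod_filter, Fin.prod_univ_castSucc]
  simp [Fin.init, not_lt.2 hk]

theorem pos_and_sigmaV_le_of_gammaV {lam : Fin n → ℝ} (hanti : Antitone lam)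
    (hΓ : GammaV k lam) :
    (∀ i : Fin n, (i : ℕ) < k → 0 < lam i) ∧
      sigmaV k lam ≤
        (n.choose k : ℝ) * ∏ i ∈ univ.filter (fun i : Fin n => (i : ℕ) < k), lam i := by
  induction n with
  | zero =>
    exact ⟨fun i => i.elim0, sigmaV_le_choose_mul_prod_of_nonneg hanti (fun i => i.elim0) k⟩
  | succ n ih =>
    rcases lt_or_ge 0 (lam (Fin.last n)) with hlast | hlast
    · have hpos : ∀ i, 0 < lam i := fun i => hlast.trans_le (hanti (Fin.le_last i))
      exact ⟨fun i _ => hpos i,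
        sigmaV_le_choose_mul_prod_of_nonneg hanti (fun i => (hpos i).le) k⟩
    have hkn : k ≤ n := le_of_sigmaV_pos (sigmaV_init_pos_of_last_nonpos hlast hΓ k le_rfl)
    obtain ⟨hpos, hle⟩ := ih (hanti.comp_monotone Fin.strictMono_castSucc.monotone)
      fun m _ hm => sigmaV_init_pos_of_last_nonpos hlast hΓ m hm
    have hpos' : ∀ i : Fin (n + 1), (i : ℕ) < k → 0 < lam i := by
      intro i hi
      have hne : i ≠ Fin.last n := by rintro rfl; simp at hi; omega
      simpa [Fin.init] using hpos (i.castPred hne) hi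
    refine ⟨hpos', ?_⟩
    set P := ∏ i ∈ univ.filter (fun i : Fin (n + 1) => (i : ℕ) < k), lam i with hP
    have hP_nonneg : 0 ≤ P := prod_nonneg fun i hi => (hpos' i (Finset.mem_filter.1 hi).2).le
    calc sigmaV k lam ≤ sigmaV k (Fin.init lam) := sigmaV_le_init_of_last_nonpos hlast hΓ
      _ ≤ (n.choose k : ℝ) * P := by rwa [hP, prod_filter_lt_eq_init hkn]
      _ ≤ ((n + 1).choose k : ℝ) * P := by gcongr; exact n.le_succ

end SortedVectors

theorem statement_14_general (n k : ℕ)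
    (lam : Fin n → ℝ) (hΓ : GammaV k lam)
    (hsort : ∀ i j : Fin n, i ≤ j → lam j ≤ lam i) :
    (∀ i : Fin n, (i : ℕ) < k → 0 < lam i) ∧
    sigmaV k lam ≤ (n.choose k : ℝ) *
      ∏ i ∈ Finset.univ.filter (fun i : Fin n => (i : ℕ) < k), lam i :=
  pos_and_sigmaV_le_of_gammaV (fun i j => hsort i j) hΓ

/-- For λ ∈ Γ_k with λ_1 ≥ ⋯ ≥ λ_n, the first k entries are positive
and σ_k(λ) ≤ C(n,k) λ_1 ⋯ λ_k. -/
theorem statement_14 (n k : ℕ) (hk : 1 ≤ k) (hkn : k ≤ n)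
    (lam : Fin n → ℝ) (hΓ : GammaV k lam)
    (hsort : ∀ i j : Fin n, i ≤ j → lam j ≤ lam i) :
    (∀ i : Fin n, (i : ℕ) < k → 0 < lam i) ∧
    sigmaV k lam ≤ (n.choose k : ℝ) *
      ∏ i ∈ Finset.univ.filter (fun i : Fin n => (i : ℕ) < k), lam i :=
  statement_14_general n k lam hΓ hsort
end

section
/- (Newton–MacLaurin inequality) Let λ ∈ Γ_k and let k, l, r, s be integers with k > l ≥ 0, r > s ≥ 0, k ≥ r and l ≥ s. Then [ (σ_k(λ)/C(n,k)) / (σ_l(λ)/C(n,l)) ]^{1/(k−l)} ≤ [ (σ_r(λ)/C(n,r)) / (σ_s(λ)/C(n,s)) ]^{1/(r−s)}, where C(n,m) = n!/(m!(n−m)!). -/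
/-!
For a real-rooted polynomial of degree `n` with coefficients `c_j`, the normalized coefficients
`a_j = c_j / C(n, j)` satisfy Newton's inequalities `a_j a_{j+2} ≤ a_{j+1}²`. By Rolle's theorem the
derivative is again real-rooted, and its normalized coefficients are those of `f` shifted down by
one index (times `n`); reversing the coefficients of a real-rooted polynomial with nonzero constant
term keeps it real-rooted. Together these reduce every index to the quadratic case, where the
inequality is the nonnegativity of the discriminant.

Applied to `∏ (X + λ_i)`, whose coefficients are the `σ_j(λ)`, this makes
`j ↦ log (σ_j(λ) / C(n, j))` concave on `0, …, k` when `λ ∈ Γ_k`. The inequality to prove compares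
the slopes of the chords over `[l, k]` and `[s, r]` of this concave sequence, and chords of a concave
sequence get steeper when either endpoint moves to the left.
-/

open Finset Set

namespace Polynomial

theorem Splits.derivative {f : ℝ[X]} (hf : f.Splits) : f.derivative.Splits := by
  rw [splits_iff_card_roots] at hf ⊢
  have := card_roots_le_derivative f
  have := card_roots' (Polynomial.derivative f)
  rw [natDegree_derivative] at *
  omega

theorem Splits.reverse {K : Type*} [Field K] {f : K[X]} (hf : f.Splits) : f.reverse.Splits := by
  induction hf using Submonoid.closure_induction with
  | mem g hg =>
    refine Splits.of_natDegree_le_one ((reverse_natDegree_le g).trans ?_)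
    rcases hg with ⟨a, rfl⟩ | ⟨a, rfl⟩
    · simp
    · exact natDegree_add_C.trans_le natDegree_X_le
  | one => rw [← C_1, reverse_C]; exact Splits.C 1
  | mul p q _ _ hp hq => rw [reverse_mul_of_domain]; exact hp.mul hq

noncomputable def normalizedCoeff (f : ℝ[X]) (j : ℕ) : ℝ := f.coeff j / f.natDegree.choose j

theorem normalizedCoeff_derivative (f : ℝ[X]) (j : ℕ) :
    f.derivative.normalizedCoeff j = f.natDegree * f.normalizedCoeff (j + 1) := by
  unfold normalizedCoeff
  rw [coeff_derivative, natDegree_derivative]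
  by_cases hj : j + 1 ≤ f.natDegree
  · obtain ⟨m, hm⟩ : ∃ m, f.natDegree = m + 1 := ⟨f.natDegree - 1, by omega⟩
    have hchoose : ((m + 1 : ℕ) : ℝ) * m.choose j = (m + 1).choose (j + 1) * (j + 1) := by
      exact_mod_cast Nat.add_one_mul_choose_eq m j
    have h1 : (0 : ℝ) < m.choose j := by exact_mod_cast Nat.choose_pos (by omega)
    have h2 : (0 : ℝ) < (m + 1).choose (j + 1) := by exact_mod_cast Nat.choose_pos (by omega)
    rw [hm, Nat.add_sub_cancel]
    push_cast at hchoose ⊢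
    field_simp
    linear_combination (-f.coeff (j + 1)) * hchoose
  · rw [coeff_eq_zero_of_natDegree_lt (by omega)]
    simp

theorem normalizedCoeff_succ_mul_le_sq_of_derivative {f : ℝ[X]} (hf : 0 < f.natDegree) {j : ℕ}
    (h : f.derivative.normalizedCoeff j * f.derivative.normalizedCoeff (j + 2) ≤
      f.derivative.normalizedCoeff (j + 1) ^ 2) :
    f.normalizedCoeff (j + 1) * f.normalizedCoeff (j + 3) ≤ f.normalizedCoeff (j + 2) ^ 2 := by
  simp only [normalizedCoeff_derivative] at h
  have hn : (0 : ℝ) < (f.natDegree : ℝ) ^ 2 := by positivity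
  refine le_of_mul_le_mul_left ?_ hn
  linear_combination h

theorem natDegree_reverse_of_coeff_zero_ne_zero {f : ℝ[X]} (h0 : f.coeff 0 ≠ 0) :
    f.reverse.natDegree = f.natDegree := by
  rw [reverse_natDegree, natTrailingDegree_eq_zero.2 (Or.inr h0), Nat.sub_zero]

theorem normalizedCoeff_reverse {f : ℝ[X]} (h0 : f.coeff 0 ≠ 0) {j : ℕ} (hj : j ≤ f.natDegree) :
    f.reverse.normalizedCoeff j = f.normalizedCoeff (f.natDegree - j) := by
  rw [normalizedCoeff, normalizedCoeff, natDegree_reverse_of_coeff_zero_ne_zero h0, coeff_reverse,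
    revAt_le hj, Nat.choose_symm hj]

theorem Splits.normalizedCoeff_zero_mul_two_le_sq {f : ℝ[X]} (hf : f.Splits)
    (hdeg : f.natDegree = 2) :
    f.normalizedCoeff 0 * f.normalizedCoeff 2 ≤ f.normalizedCoeff 1 ^ 2 := by
  obtain ⟨x, hx⟩ := hf.exists_eval_eq_zero
    (by rw [degree_eq_natDegree (by rintro rfl; simp at hdeg), hdeg]; decide)
  rw [eval_eq_sum_range, hdeg] at hx
  simp only [Finset.sum_range_succ, Finset.sum_range_zero] at hx
  have hdisc := discrim_eq_sq_of_quadratic_eq_zero (a := f.coeff 2) (b := f.coeff 1)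
    (c := f.coeff 0) (x := x) (by linear_combination hx)
  simp only [normalizedCoeff, hdeg, discrim] at hdisc ⊢
  simp only [Nat.choose_zero_right, Nat.choose_self, Nat.choose_one_right, Nat.cast_one,
    Nat.cast_ofNat, div_one]
  nlinarith [sq_nonneg (2 * f.coeff 2 * x + f.coeff 1)]

theorem Splits.normalizedCoeff_mul_le_sq {f : ℝ[X]} (hf : f.Splits) {j : ℕ}
    (hj : j + 2 ≤ f.natDegree) :
    f.normalizedCoeff j * f.normalizedCoeff (j + 2) ≤ f.normalizedCoeff (j + 1) ^ 2 := by
  obtain ⟨n, hdeg⟩ : ∃ n, f.natDegree = n := ⟨_, rfl⟩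
  induction n generalizing f j with
  | zero => omega
  | succ n ih =>
    have hshift : ∀ g : ℝ[X], g.Splits → g.natDegree = n + 1 → ∀ i, i + 3 ≤ n + 1 →
        g.normalizedCoeff (i + 1) * g.normalizedCoeff (i + 3) ≤ g.normalizedCoeff (i + 2) ^ 2 :=
      fun g hg hgdeg i hi => normalizedCoeff_succ_mul_le_sq_of_derivative (by omega)
        (ih hg.derivative (by simp [hgdeg]; omega) (by simp [hgdeg]))
    rcases j with _ | j
    · by_cases h2 : n + 1 = 2
      · exact hf.normalizedCoeff_zero_mul_two_le_sq (hdeg.trans h2)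
      by_cases h0 : f.coeff 0 = 0
      · simp only [normalizedCoeff, h0, zero_div, zero_mul]
        positivity
      -- reversing the coefficients turns the indices 0, 1, 2 into n + 1, n, n - 1, covered by `hshift`
      have h := hshift f.reverse hf.reverse
        ((natDegree_reverse_of_coeff_zero_ne_zero h0).trans hdeg) (n - 2) (by omega)
      rw [normalizedCoeff_reverse h0 (by omega), normalizedCoeff_reverse h0 (by omega),
        normalizedCoeff_reverse h0 (by omega), hdeg, show n + 1 - (n - 2 + 1) = 2 by omega,
        show n + 1 - (n - 2 + 3) = 0 by omega, show n + 1 - (n - 2 + 2) = 1 by omega] at h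
      linear_combination h
    · exact hshift f hf hdeg j (by omega)

end Polynomial

section ElementarySymmetric

open Polynomial

theorem natDegree_prod_X_add_C {n : ℕ} (lam : Fin n → ℝ) :
    (∏ i, (X + C (lam i))).natDegree = n := by
  rw [natDegree_prod_of_monic _ _ fun i _ => monic_X_add_C (lam i)]
  simp

theorem normalizedCoeff_prod_X_add_C {n : ℕ} (lam : Fin n → ℝ) {j : ℕ} (hj : j ≤ n) :
    (∏ i, (X + C (lam i))).normalizedCoeff (n - j) = sigmaV j lam / n.choose j := by
  rw [normalizedCoeff, natDegree_prod_X_add_C, Nat.choose_symm hj,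
    Finset.prod_X_add_C_coeff _ _ (by simp)]
  simp [sigmaV, Nat.sub_sub_self hj]

theorem sigmaV_newton {n : ℕ} (lam : Fin n → ℝ) {m : ℕ} (hm : m + 2 ≤ n) :
    sigmaV m lam / n.choose m * (sigmaV (m + 2) lam / n.choose (m + 2)) ≤
      (sigmaV (m + 1) lam / n.choose (m + 1)) ^ 2 := by
  have hsplits : (∏ i, (X + C (lam i))).Splits := Splits.prod fun i _ => Splits.X_add_C (lam i)
  have h := hsplits.normalizedCoeff_mul_le_sq (j := n - (m + 2))
    (by rw [natDegree_prod_X_add_C]; omega)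
  rw [show n - (m + 2) + 1 = n - (m + 1) by omega, show n - (m + 2) + 2 = n - m by omega,
    normalizedCoeff_prod_X_add_C lam (by omega), normalizedCoeff_prod_X_add_C lam (by omega),
    normalizedCoeff_prod_X_add_C lam (by omega)] at h
  linear_combination h

end ElementarySymmetric

section ConcaveSequence

variable {F : ℕ → ℝ} {k : ℕ}

theorem concave_sub_antitone (hF : ∀ j, j + 2 ≤ k → F j + F (j + 2) ≤ 2 * F (j + 1))
    {i j : ℕ} (hij : i ≤ j) (hjk : j + 1 ≤ k) : F (j + 1) - F j ≤ F (i + 1) - F i := by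
  induction j, hij using Nat.le_induction with
  | base => rfl
  | succ j hij ih => linarith [hF j (by omega), ih (by omega)]

theorem concave_three_chord (hF : ∀ j, j + 2 ≤ k → F j + F (j + 2) ≤ 2 * F (j + 1))
    {a b c : ℕ} (hab : a ≤ b) (hbc : b ≤ c) (hck : c ≤ k) :
    (F c - F b) * ((b : ℝ) - a) ≤ (F b - F a) * ((c : ℝ) - b) := by
  rcases hab.eq_or_lt with rfl | hab
  · simp
  obtain ⟨b, rfl⟩ : ∃ b', b = b' + 1 := ⟨b - 1, by omega⟩
  set v := F (b + 1) - F b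
  have hright : F c - F (b + 1) ≤ ((c : ℝ) - (b + 1 : ℕ)) * v := by
    rw [← Finset.sum_Ico_sub F hbc, ← Nat.cast_sub hbc, ← Nat.card_Ico, ← nsmul_eq_mul]
    refine Finset.sum_le_card_nsmul _ _ _ fun j hj => ?_
    rw [Finset.mem_Ico] at hj
    exact concave_sub_antitone hF (by omega) (by omega)
  have hleft : ((b + 1 : ℕ) - (a : ℝ)) * v ≤ F (b + 1) - F a := by
    rw [← Finset.sum_Ico_sub F hab.le, ← Nat.cast_sub hab.le, ← Nat.card_Ico, ← nsmul_eq_mul]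
    refine Finset.card_nsmul_le_sum _ _ _ fun j hj => ?_
    rw [Finset.mem_Ico] at hj
    exact concave_sub_antitone hF (by omega) (by omega)
  have hba : (0 : ℝ) ≤ (b + 1 : ℕ) - (a : ℝ) := sub_nonneg.2 (by exact_mod_cast hab.le)
  have hcb : (0 : ℝ) ≤ (c : ℝ) - (b + 1 : ℕ) := sub_nonneg.2 (by exact_mod_cast hbc)
  nlinarith [mul_le_mul_of_nonneg_right hright hba, mul_le_mul_of_nonneg_left hleft hcb]

theorem concave_slope_le_slope (hF : ∀ j, j + 2 ≤ k → F j + F (j + 2) ≤ 2 * F (j + 1))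
    {l r s : ℕ} (hlk : l < k) (hsr : s < r) (hrk : r ≤ k) (hsl : s ≤ l) :
    (F k - F l) / ((k : ℝ) - l) ≤ (F r - F s) / ((r : ℝ) - s) := by
  have hkl : (0 : ℝ) < (k : ℝ) - l := sub_pos.2 (by exact_mod_cast hlk)
  have hrs : (0 : ℝ) < (r : ℝ) - s := sub_pos.2 (by exact_mod_cast hsr)
  have hks : (0 : ℝ) < (k : ℝ) - s := sub_pos.2 (by exact_mod_cast hsl.trans_lt hlk)
  calc (F k - F l) / ((k : ℝ) - l) ≤ (F k - F s) / ((k : ℝ) - s) := by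
        rw [div_le_div_iff₀ hkl hks]
        linear_combination concave_three_chord hF hsl hlk.le le_rfl
    _ ≤ (F r - F s) / ((r : ℝ) - s) := by
        rw [div_le_div_iff₀ hks hrs]
        linear_combination concave_three_chord hF hsr.le hrk le_rfl

end ConcaveSequence

theorem statement_16_general (n k l r s : ℕ) (hkn : k ≤ n)
    (lam : Fin n → ℝ) (hΓ : GammaV k lam)
    (hlk : l < k) (hsr : s < r) (hrk : r ≤ k) (hsl : s ≤ l) :
    ((sigmaV k lam / (n.choose k : ℝ)) / (sigmaV l lam / (n.choose l : ℝ)))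
        ^ ((1 : ℝ) / ((k : ℝ) - (l : ℝ))) ≤
      ((sigmaV r lam / (n.choose r : ℝ)) / (sigmaV s lam / (n.choose s : ℝ)))
        ^ ((1 : ℝ) / ((r : ℝ) - (s : ℝ))) := by
  set p : ℕ → ℝ := fun j => sigmaV j lam / n.choose j
  have hp : ∀ j ≤ k, 0 < p j := by
    intro j hj
    have hchoose : (0 : ℝ) < n.choose j := by exact_mod_cast Nat.choose_pos (hj.trans hkn)
    rcases j with _ | j
    · simp [p, sigmaV]
    · exact div_pos (hΓ _ (by omega) hj) hchoose
  have hconcave : ∀ j, j + 2 ≤ k →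
      Real.log (p j) + Real.log (p (j + 2)) ≤ 2 * Real.log (p (j + 1)) := by
    intro j hj
    have hj0 := hp j (by omega)
    have hj2 := hp (j + 2) hj
    calc Real.log (p j) + Real.log (p (j + 2)) = Real.log (p j * p (j + 2)) :=
          (Real.log_mul hj0.ne' hj2.ne').symm
      _ ≤ Real.log (p (j + 1) ^ 2) :=
          Real.log_le_log (by positivity) (sigmaV_newton lam (hj.trans hkn))
      _ = 2 * Real.log (p (j + 1)) := by rw [Real.log_pow]; norm_num
  have hslope := concave_slope_le_slope hconcave hlk hsr hrk hsl
  have hps := hp s (hsl.trans hlk.le)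
  rw [← Real.log_div (hp k le_rfl).ne' (hp l hlk.le).ne', ← Real.log_div (hp r hrk).ne' hps.ne']
    at hslope
  rw [Real.rpow_def_of_pos (div_pos (hp k le_rfl) (hp l hlk.le)),
    Real.rpow_def_of_pos (div_pos (hp r hrk) hps), Real.exp_le_exp]
  simpa only [mul_one_div] using hslope

/-- Newton–MacLaurin: for λ ∈ Γ_k and k > l ≥ 0, r > s ≥ 0, k ≥ r, l ≥ s,
[(σ_k/C(n,k))/(σ_l/C(n,l))]^{1/(k−l)} ≤ [(σ_r/C(n,r))/(σ_s/C(n,s))]^{1/(r−s)}. -/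
theorem statement_16 (n k l r s : ℕ) (hk : 1 ≤ k) (hkn : k ≤ n)
    (lam : Fin n → ℝ) (hΓ : GammaV k lam)
    (hlk : l < k) (hsr : s < r) (hrk : r ≤ k) (hsl : s ≤ l) :
    ((sigmaV k lam / (n.choose k : ℝ)) / (sigmaV l lam / (n.choose l : ℝ)))
        ^ ((1 : ℝ) / ((k : ℝ) - (l : ℝ))) ≤
      ((sigmaV r lam / (n.choose r : ℝ)) / (sigmaV s lam / (n.choose s : ℝ)))
        ^ ((1 : ℝ) / ((r : ℝ) - (s : ℝ))) :=
  statement_16_general n k l r s hkn lam hΓ hlk hsr hrk hsl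
end
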